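/- arXiv:1804.05580 — 3 statements merged into one kernel-verified Lean document; each statement's English description precedes it below -/
import Mathlib

section
/- Let E be a metric space, D ⊆ E compact, and f : E → E continuous. Suppose that for every natural number k there exists a finite orbit segment {v_{-k}, ..., v_k} ⊆ D with f(v_i) = v_{i+1} for i = -k, ..., k-1 and with v_0 lying in a fixed compact subset D_0 ⊆ D. Then there exists a full orbit {w_i}_{i∈ℤ} ⊆ D with f(w_i) = w_{i+1} for all i ∈ ℤ and w_0 ∈ D_0. -/
/-- If for every `k` there is an orbit segment of length `2k+1` of the continuous
map `f` lying in the compact set `D`, with midpoint in a fixed compact `D₀ ⊆ D`,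
then there is a full (bi-infinite) orbit in `D` passing through `D₀`. -/
theorem full_orbit_limit {E : Type*} [MetricSpace E] (D D₀ : Set E)
    (hD : IsCompact D) (hD₀ : IsCompact D₀) (hsub : D₀ ⊆ D)
    (f : E → E) (hf : Continuous f)
    (h : ∀ k : ℕ, ∃ v : ℤ → E, v 0 ∈ D₀ ∧ (∀ i : ℤ, |i| ≤ (k : ℤ) → v i ∈ D) ∧
      ∀ i : ℤ, -(k : ℤ) ≤ i → i ≤ (k : ℤ) - 1 → f (v i) = v (i + 1)) :
    ∃ w : ℤ → E, w 0 ∈ D₀ ∧ (∀ i : ℤ, w i ∈ D) ∧ ∀ i : ℤ, f (w i) = w (i + 1) := by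
  set S : ℕ → Set (ℤ → E) := fun k =>
    {w | w 0 ∈ D₀ ∧ (∀ i : ℤ, w i ∈ D) ∧
      ∀ i : ℤ, -(k : ℤ) ≤ i → i ≤ (k : ℤ) - 1 → f (w i) = w (i + 1)} with hS
  have hclosed : ∀ k, IsClosed (S k) := by
    intro k
    have heq : S k = ((fun w : ℤ → E => w 0) ⁻¹' D₀)
        ∩ (⋂ i : ℤ, (fun w : ℤ → E => w i) ⁻¹' D)
        ∩ (⋂ i : ℤ, {w : ℤ → E | -(k : ℤ) ≤ i → i ≤ (k : ℤ) - 1 → f (w i) = w (i + 1)}) := by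
      ext w
      simp only [hS, Set.mem_setOf_eq, Set.mem_inter_iff, Set.mem_preimage, Set.mem_iInter]
      tauto
    rw [heq]
    refine (IsClosed.inter ((hD₀.isClosed).preimage (continuous_apply 0))
      (isClosed_iInter fun i => (hD.isClosed).preimage (continuous_apply i))).inter ?_
    refine isClosed_iInter fun i => ?_
    rcases Classical.em (-(k : ℤ) ≤ i ∧ i ≤ (k : ℤ) - 1) with hp | hp
    · have he : {w : ℤ → E | -(k : ℤ) ≤ i → i ≤ (k : ℤ) - 1 → f (w i) = w (i + 1)}
          = {w : ℤ → E | f (w i) = w (i + 1)} := by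
        ext w; simp [hp.1, hp.2]
      rw [he]
      exact isClosed_eq (hf.comp (continuous_apply i)) (continuous_apply (i + 1))
    · have he : {w : ℤ → E | -(k : ℤ) ≤ i → i ≤ (k : ℤ) - 1 → f (w i) = w (i + 1)}
          = Set.univ := by
        ext w; simp only [Set.mem_setOf_eq, Set.mem_univ, iff_true]
        intro h1 h2; exact absurd ⟨h1, h2⟩ hp
      rw [he]; exact isClosed_univ
  have hne : ∀ k, (S k).Nonempty := by
    intro k
    obtain ⟨v, hv0, hvD, hvf⟩ := h k
    refine ⟨fun i => v (max (-(k : ℤ)) (min (k : ℤ) i)), ?_, ?_, ?_⟩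
    · have : max (-(k : ℤ)) (min (k : ℤ) 0) = 0 := by
        have : (0 : ℤ) ≤ k := Int.ofNat_nonneg k
        omega
      simpa [this] using hv0
    · intro i
      apply hvD
      have : (0 : ℤ) ≤ k := Int.ofNat_nonneg k
      rw [abs_le]; omega
    · intro i h1 h2
      have e1 : max (-(k : ℤ)) (min (k : ℤ) i) = i := by omega
      have e2 : max (-(k : ℤ)) (min (k : ℤ) (i + 1)) = i + 1 := by omega
      simp only [e1, e2]
      exact hvf i h1 h2
  have hmono : ∀ k, S (k + 1) ⊆ S k := by
    intro k w ⟨h0, hDw, hfw⟩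
    exact ⟨h0, hDw, fun i h1 h2 => hfw i (by push_cast; omega) (by push_cast; omega)⟩
  have hcompact : IsCompact (S 0) := by
    have hsubpi : S 0 ⊆ Set.pi Set.univ (fun _ : ℤ => D) := by
      intro w hw i _
      exact hw.2.1 i
    exact (isCompact_univ_pi fun _ => hD).of_isClosed_subset (hclosed 0) hsubpi
  obtain ⟨w, hw⟩ := IsCompact.nonempty_iInter_of_sequence_nonempty_isCompact_isClosed
    S hmono hne hcompact hclosed
  simp only [Set.mem_iInter] at hw
  refine ⟨w, (hw 0).1, (hw 0).2.1, fun i => ?_⟩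
  obtain ⟨_, _, hfw⟩ := hw (i.natAbs + 1)
  exact hfw i (by omega) (by omega)
end

section
/- (Whyburn's lemma) Let K be a compact metric space and K_0, K_1 two closed disjoint subsets of K. Then either there exists a connected component of K meeting both K_0 and K_1, or there exist two disjoint compact sets K̂_0 and K̂_1 such that K = K̂_0 ∪ K̂_1 and K_i ⊆ K̂_i for i = 0, 1. -/
/-- Whyburn's lemma: in a compact metric space `K`, given two disjoint closed sets
`K₀, K₁`, either there is a connected component of `K` meeting both, or `K` splits
into two disjoint compact sets containing `K₀` and `K₁` respectively. -/
theorem whyburn_lemma {K : Type*} [MetricSpace K] [CompactSpace K]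
    (K₀ K₁ : Set K) (h₀ : IsClosed K₀) (h₁ : IsClosed K₁) (hd : Disjoint K₀ K₁) :
    (∃ x : K, (connectedComponent x ∩ K₀).Nonempty ∧ (connectedComponent x ∩ K₁).Nonempty) ∨
    (∃ A B : Set K, IsCompact A ∧ IsCompact B ∧ Disjoint A B ∧ A ∪ B = Set.univ ∧
      K₀ ⊆ A ∧ K₁ ⊆ B) := by
  by_cases hcomp : ∃ x : K, (connectedComponent x ∩ K₀).Nonempty ∧
      (connectedComponent x ∩ K₁).Nonempty
  · exact Or.inl hcomp
  right
  push_neg at hcomp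
  set Y := ConnectedComponents K
  set π : K → Y := ConnectedComponents.mk
  have hπ : Continuous π := continuous_quot_mk
  haveI : CompactSpace Y := Quotient.compactSpace
  -- images of K₀, K₁ in the space of connected components
  have hc₀ : IsCompact (π '' K₀) := (h₀.isCompact).image hπ
  have hc₁ : IsCompact (π '' K₁) := (h₁.isCompact).image hπ
  have hdisj : Disjoint (π '' K₀) (π '' K₁) := by
    rw [Set.disjoint_left]
    rintro y ⟨x₀, hx₀, rfl⟩ ⟨x₁, hx₁, hx⟩
    have : connectedComponent x₁ = connectedComponent x₀ :=
      ConnectedComponents.coe_eq_coe.mp hx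
    have h := hcomp x₀ ⟨x₀, mem_connectedComponent, hx₀⟩
    have hmem : x₁ ∈ connectedComponent x₀ ∩ K₁ :=
      ⟨this ▸ mem_connectedComponent, hx₁⟩
    simp [h] at hmem
  -- each point of π '' K₀ has a clopen neighborhood avoiding π '' K₁
  have hopen : IsOpen (π '' K₁)ᶜ := hc₁.isClosed.isOpen_compl
  have hcover : π '' K₀ ⊆ ⋃ W ∈ {W : Set Y | IsClopen W ∧ W ⊆ (π '' K₁)ᶜ}, W := by
    intro y hy
    obtain ⟨W, hW, hyW, hWsub⟩ := compact_exists_isClopen_in_isOpen hopen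
      (Set.disjoint_left.mp hdisj hy)
    exact Set.mem_biUnion ⟨hW, hWsub⟩ hyW
  obtain ⟨b, hb, hbfin, hbcov⟩ := hc₀.elim_finite_subcover_image
    (fun W hW => hW.1.2) hcover
  set W : Set Y := ⋃ V ∈ b, V with hWdef
  have hWclopen : IsClopen W := hbfin.isClopen_biUnion fun V hV => (hb hV).1
  have hWsub : W ⊆ (π '' K₁)ᶜ := Set.iUnion₂_subset fun V hV => (hb hV).2
  refine ⟨π ⁻¹' W, π ⁻¹' Wᶜ, ?_, ?_, ?_, ?_, ?_, ?_⟩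
  · exact (hWclopen.isClosed.preimage hπ).isCompact
  · exact (hWclopen.compl.isClosed.preimage hπ).isCompact
  · exact (disjoint_compl_right.preimage π)
  · rw [← Set.preimage_union, Set.union_compl_self, Set.preimage_univ]
  · exact fun x hx => hbcov ⟨x, hx, rfl⟩
  · intro x hx
    exact fun hW => hWsub hW ⟨x, hx, rfl⟩
end

section
/- Let μ = 1/10 and define h_x(α, x, y) = 2αx + (1-α)(4x³ - (8/5)x + (1/2)xy) and h_y(α, θ, x, y) = (1-α)(μy + (2/5)sin θ + x cos θ). Then for all α ∈ [0,1], θ ∈ ℝ, x ∈ [-1,1], y ∈ [-1.2,1.2]: (i) h_x(α, 1, y) > 1 and h_x(α, -1, y) < -1, and (ii) |h_y(α, θ, x, y)| < 1.2. -/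
/-- Exit and entry conditions for the homotopy used in the computer-assisted proof:
with `μ = 1/10`, `h_x(α,x,y) = 2αx + (1-α)(4x³ - (8/5)x + ½xy)` and
`h_y(α,θ,x,y) = (1-α)(μy + (2/5) sin θ + x cos θ)`, for all `α ∈ [0,1]`, `θ ∈ ℝ`,
`x ∈ [-1,1]`, `y ∈ [-1.2,1.2]` one has `h_x(α,1,y) > 1`, `h_x(α,-1,y) < -1`, and
`|h_y(α,θ,x,y)| < 1.2`. -/
theorem cap_example_covering_conditions
    (Hx : ℝ → ℝ → ℝ → ℝ) (Hy : ℝ → ℝ → ℝ → ℝ → ℝ)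
    (hHx : ∀ α x y, Hx α x y =
      2 * α * x + (1 - α) * (4 * x ^ 3 - (8 / 5) * x + (1 / 2) * x * y))
    (hHy : ∀ α θ x y, Hy α θ x y =
      (1 - α) * ((1 / 10) * y + (2 / 5) * Real.sin θ + x * Real.cos θ)) :
    ∀ α ∈ Set.Icc (0 : ℝ) 1, ∀ θ : ℝ, ∀ x ∈ Set.Icc (-1 : ℝ) 1,
      ∀ y ∈ Set.Icc (-1.2 : ℝ) 1.2,
        1 < Hx α 1 y ∧ Hx α (-1) y < -1 ∧ |Hy α θ x y| < 1.2 := by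
  rintro α ⟨ha0, ha1⟩ θ x ⟨hx0, hx1⟩ y ⟨hy0, hy1⟩
  have hs := Real.sin_sq_add_cos_sq θ
  set s := Real.sin θ
  set c := Real.cos θ
  refine ⟨?_, ?_, ?_⟩
  · rw [hHx]; nlinarith
  · rw [hHx]; nlinarith
  · rw [hHy, abs_lt]
    have key : (2 / 5 * s + x * c) ^ 2 ≤ 4 / 25 + x ^ 2 := by
      nlinarith [sq_nonneg (2 / 5 * c - x * s)]
    have h1 : |2 / 5 * s + x * c| < 27 / 25 := by
      rw [abs_lt]
      constructor <;> nlinarith [sq_nonneg (2 / 5 * s + x * c)]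
    rw [abs_lt] at h1
    constructor <;> nlinarith
end
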